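/- Let M be a positive definite symmetric half-integral m×m matrix and Ω ∈ H_n. Suppose φ : H_ℝ^{(n,m)} → ℂ satisfies φ((ξ,η,κ)∘g) = exp(2πi σ(Mκ)) · exp(2πi σ(M ξ ᵗη)) · φ(g) for all g ∈ H_ℝ^{(n,m)} and all (ξ,η,κ) ∈ H_ℝ^{(n,m)} with ξ, η ∈ ℤ^{(m,n)} and κ ∈ ℝ^{(m,m)}. Define F_{Ω,φ}(λ,μ) = exp(−2πi σ(M λ Ω ᵗλ)) · φ((λ, μ, −μᵗλ)) for λ, μ ∈ ℝ^{(m,n)}. Then for all λ, μ ∈ ℝ^{(m,n)} and all ξ, η ∈ ℤ^{(m,n)}: F_{Ω,φ}(λ+ξ, μ+η) = exp(−2πi σ(M(ξΩᵗξ + 2λΩᵗξ + 2μᵗξ))) · F_{Ω,φ}(λ,μ). Equivalently, the function θ_{Ω,φ}(λΩ+μ) := F_{Ω,φ}(λ,μ) on ℂ^{(m,n)} satisfies the theta transformation law θ_{Ω,φ}(W + ξΩ + η) = exp(−2πi σ(M(ξΩᵗξ + 2Wᵗξ))) θ_{Ω,φ}(W) for W = λΩ+μ. -/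
import Mathlib


open Matrix

private lemma trace_mul_symm' {k : ℕ} {R : Type*} [CommRing R]
    (M : Matrix (Fin k) (Fin k) R) (B : Matrix (Fin k) (Fin k) R)
    (hM : M.IsSymm) : Matrix.trace (M * B) = Matrix.trace (M * Bᵀ) := by
  conv_rhs => rw [← Matrix.trace_transpose, Matrix.transpose_mul, Matrix.transpose_transpose,
    hM, Matrix.trace_mul_comm]

private lemma trace_ofReal {k : ℕ} (X : Matrix (Fin k) (Fin k) ℝ) :
    ((Matrix.trace X : ℝ) : ℂ) = Matrix.trace (X.map Complex.ofReal) := by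
  simp [Matrix.trace, Matrix.diag]


private lemma map_mul_ofReal {a b c : ℕ} (A : Matrix (Fin a) (Fin b) ℝ)
    (B : Matrix (Fin b) (Fin c) ℝ) :
    (A * B).map Complex.ofReal = A.map Complex.ofReal * B.map Complex.ofReal := by
  ext i k
  simp [Matrix.mul_apply]


/-- `F_{Ω,φ}(λ,μ) = exp(−2πi σ(M λΩᵗλ)) φ((λ,μ,−μᵗλ))`. -/
noncomputable def FOmegaPhi {m n : ℕ} (M : Matrix (Fin m) (Fin m) ℝ)
    (Ω : Matrix (Fin n) (Fin n) ℂ)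
    (φ : Matrix (Fin m) (Fin n) ℝ → Matrix (Fin m) (Fin n) ℝ → Matrix (Fin m) (Fin m) ℝ → ℂ)
    (lam mu : Matrix (Fin m) (Fin n) ℝ) : ℂ :=
  Complex.exp (-(2 * (Real.pi : ℂ) * Complex.I) * Matrix.trace (M.map Complex.ofReal *
      (lam.map Complex.ofReal * Ω * (lam.map Complex.ofReal)ᵀ))) *
    φ lam mu (-(mu * lamᵀ))

/-- If `φ` transforms under the integral lattice subgroup of the Heisenberg group by the
indicated character, then `F_{Ω,φ}` (equivalently `θ_{Ω,φ}(λΩ+μ) = F_{Ω,φ}(λ,μ)`) satisfies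
the theta transformation law of level `2M` with respect to `Ω`. -/
theorem stmt8 {m n : ℕ} (M : Matrix (Fin m) (Fin m) ℝ) (hMpos : M.PosDef) (hMsymm : M.IsSymm)
    (hMhalf : ∀ i j, ∃ z : ℤ, 2 * M i j = (z : ℝ)) (hMdiag : ∀ i, ∃ z : ℤ, M i i = (z : ℝ))
    (Ω : Matrix (Fin n) (Fin n) ℂ) (hΩsymm : Ω.IsSymm)
    (hΩim : (Matrix.of fun i j => (Ω i j).im).PosDef)
    (φ : Matrix (Fin m) (Fin n) ℝ → Matrix (Fin m) (Fin n) ℝ → Matrix (Fin m) (Fin m) ℝ → ℂ)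
    (hφ : ∀ (ξ η : Matrix (Fin m) (Fin n) ℤ) (ka : Matrix (Fin m) (Fin m) ℝ),
      (ka + η.map (Int.cast : ℤ → ℝ) * (ξ.map (Int.cast : ℤ → ℝ))ᵀ).IsSymm →
      ∀ (lam mu : Matrix (Fin m) (Fin n) ℝ) (ka₁ : Matrix (Fin m) (Fin m) ℝ),
        (ka₁ + mu * lamᵀ).IsSymm →
        φ (ξ.map (Int.cast : ℤ → ℝ) + lam) (η.map (Int.cast : ℤ → ℝ) + mu)
            (ka + ka₁ + ξ.map (Int.cast : ℤ → ℝ) * muᵀ - η.map (Int.cast : ℤ → ℝ) * lamᵀ) =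
          Complex.exp (2 * (Real.pi : ℂ) * Complex.I *
              Complex.ofReal (Matrix.trace (M * ka))) *
            Complex.exp (2 * (Real.pi : ℂ) * Complex.I * Complex.ofReal
              (Matrix.trace (M * (ξ.map (Int.cast : ℤ → ℝ) *
                (η.map (Int.cast : ℤ → ℝ))ᵀ)))) *
            φ lam mu ka₁) :
    ∀ (lam mu : Matrix (Fin m) (Fin n) ℝ) (ξ η : Matrix (Fin m) (Fin n) ℤ),
      FOmegaPhi M Ω φ (lam + ξ.map (Int.cast : ℤ → ℝ)) (mu + η.map (Int.cast : ℤ → ℝ)) =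
        Complex.exp (-(2 * (Real.pi : ℂ) * Complex.I) * Matrix.trace (M.map Complex.ofReal *
            (ξ.map (Int.cast : ℤ → ℂ) * Ω * (ξ.map (Int.cast : ℤ → ℂ))ᵀ +
              2 • (lam.map Complex.ofReal * Ω * (ξ.map (Int.cast : ℤ → ℂ))ᵀ) +
              2 • (mu.map Complex.ofReal * (ξ.map (Int.cast : ℤ → ℂ))ᵀ)))) *
          FOmegaPhi M Ω φ lam mu := by
  intro lam mu ξ η
  set ξr : Matrix (Fin m) (Fin n) ℝ := ξ.map (Int.cast : ℤ → ℝ) with hξr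
  set ηr : Matrix (Fin m) (Fin n) ℝ := η.map (Int.cast : ℤ → ℝ) with hηr
  set Mc : Matrix (Fin m) (Fin m) ℂ := M.map Complex.ofReal with hMc
  set lamc : Matrix (Fin m) (Fin n) ℂ := lam.map Complex.ofReal with hlamc
  set muc : Matrix (Fin m) (Fin n) ℂ := mu.map Complex.ofReal with hmuc
  set ξc : Matrix (Fin m) (Fin n) ℂ := ξr.map Complex.ofReal with hξc
  -- cast identity
  have hcastξ : ξ.map (Int.cast : ℤ → ℂ) = ξc := by
    ext i j; simp [hξc, hξr]
  -- the ka we feed to hφ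
  set ka : Matrix (Fin m) (Fin m) ℝ := -(ξr * muᵀ + mu * ξrᵀ) - ηr * ξrᵀ with hka
  have hsym1 : (ka + ηr * ξrᵀ).IsSymm := by
    rw [hka, sub_add_cancel]
    simp [Matrix.IsSymm, Matrix.transpose_add, Matrix.transpose_mul, add_comm]
  have hsym2 : (-(mu * lamᵀ) + mu * lamᵀ).IsSymm := by
    simp [Matrix.IsSymm]
  have key := hφ ξ η ka hsym1 lam mu (-(mu * lamᵀ)) hsym2
  simp only [← hξr, ← hηr] at key
  -- identify the kappa argument
  have harg : ka + -(mu * lamᵀ) + ξr * muᵀ - ηr * lamᵀ =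
      -((mu + ηr) * (lam + ξr)ᵀ) := by
    rw [hka, Matrix.transpose_add, Matrix.add_mul, Matrix.mul_add, Matrix.mul_add]
    abel
  rw [harg] at key
  -- unfold F
  unfold FOmegaPhi
  rw [show lam + ξr = ξr + lam from add_comm _ _, show mu + ηr = ηr + mu from add_comm _ _]
  rw [show -((ηr + mu) * (ξr + lam)ᵀ) = -((mu + ηr) * (lam + ξr)ᵀ) by rw [add_comm ηr, add_comm ξr]]
  rw [key]
  rw [show ((ξr + lam).map Complex.ofReal) = ξc + lamc by
    rw [hξc, hlamc]; exact Matrix.map_add _ (by push_cast; simp) _ _]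
  rw [hcastξ]
  -- trace facts
  have hMcsymm : Mc.IsSymm := by
    rw [hMc, Matrix.IsSymm, ← Matrix.transpose_map]
    rw [hMsymm]
  have s1 : Matrix.trace (Mc * (ξc * Ω * lamcᵀ)) = Matrix.trace (Mc * (lamc * Ω * ξcᵀ)) := by
    rw [trace_mul_symm' _ _ hMcsymm]
    congr 2
    rw [Matrix.transpose_mul, Matrix.transpose_mul, Matrix.transpose_transpose, hΩsymm,
      Matrix.mul_assoc]
  have s2 : Matrix.trace (M * (ξr * muᵀ)) = Matrix.trace (M * (mu * ξrᵀ)) := by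
    rw [trace_mul_symm' _ _ hMsymm, Matrix.transpose_mul, Matrix.transpose_transpose]
  have s3 : Matrix.trace (M * (ηr * ξrᵀ)) = Matrix.trace (M * (ξr * ηrᵀ)) := by
    rw [trace_mul_symm' _ _ hMsymm, Matrix.transpose_mul, Matrix.transpose_transpose]
  -- real -> complex for the mu*ξ trace
  have hmuξ : ((Matrix.trace (M * (mu * ξrᵀ)) : ℝ) : ℂ) = Matrix.trace (Mc * (muc * ξcᵀ)) := by
    rw [trace_ofReal, map_mul_ofReal, map_mul_ofReal, Matrix.transpose_map]
  -- the exponent bookkeeping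
  rw [← mul_assoc, ← mul_assoc, ← Complex.exp_add, ← Complex.exp_add]
  conv_rhs => rw [← mul_assoc, ← Complex.exp_add]
  congr 1
  simp only [← hMc, ← hlamc, ← hmuc, ← hξc]
  have hA : Matrix.trace (M * ka) = -2 * Matrix.trace (M * (mu * ξrᵀ)) - Matrix.trace (M * (ξr * ηrᵀ)) := by
    rw [hka]
    rw [sub_eq_add_neg, Matrix.mul_add, Matrix.mul_neg, Matrix.mul_add, Matrix.mul_neg]
    rw [Matrix.trace_add, Matrix.trace_neg, Matrix.trace_add, Matrix.trace_neg, s2, s3]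
    ring
  rw [hA]
  push_cast
  rw [hmuξ]
  simp only [Matrix.transpose_add, Matrix.mul_add, Matrix.add_mul, Matrix.mul_smul,
    Matrix.trace_add, Matrix.trace_smul]
  simp only [nsmul_eq_mul, Nat.cast_ofNat]
  rw [s1]
  ring
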